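/- arXiv:1907.06771 — 2 statements merged into one kernel-verified Lean document; each statement's English description precedes it below -/
import Mathlib

section
/- Let φ : ℝ → ℝ and suppose ID*_φ := lim_{θ→0} θ·φ'(θ)/φ(θ) exists. Let t, w be such that t/w > 0 and φ(t)/φ(w) > 0, and suppose φ is non-zero and continuously differentiable everywhere on the closed interval [min{t,w}, max{t,w}]. Then φ(t)/φ(w) = (t/w)^{ID*_φ} · exp(∫_t^w (ID*_φ − θφ'(θ)/φ(θ))/θ dθ). -/
/-!
Away from `0`, the integrand `(d - θ φ'(θ)/φ(θ)) / θ = d/θ - φ'(θ)/φ(θ)` is the derivative of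
`d log θ - log φ(θ)`, so the integral equals `d log (w/t) - log (φ w / φ t)`;
exponentiating gives the identity.
-/

open Topology Set

theorem zero_notMem_uIcc_of_div_pos {a b : ℝ} (h : 0 < a / b) : (0 : ℝ) ∉ uIcc a b := by
  rw [mem_uIcc]
  rcases div_pos_iff.mp h with ⟨ha, hb⟩ | ⟨ha, hb⟩ <;>
    rintro (⟨h₁, h₂⟩ | ⟨h₁, h₂⟩) <;> linarith

theorem uIcc_mem_nhds_of_mem_uIoo {a b x : ℝ} (hx : x ∈ uIoo a b) : uIcc a b ∈ 𝓝 x :=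
  Icc_mem_nhds hx.1 hx.2

namespace intervalIntegral

theorem integral_eq_sub_of_contDiffOn_uIcc_of_eqOn_uIoo {E : Type*} [NormedAddCommGroup E]
    [NormedSpace ℝ E] [CompleteSpace E] {f g : ℝ → E} {a b : ℝ}
    (hf : ContDiffOn ℝ 1 f (uIcc a b)) (hg : EqOn g (deriv f) (uIoo a b)) :
    ∫ x in a..b, g x = f b - f a := by
  rw [integral_congr_uIoo hg, integral_deriv_of_contDiffOn_uIcc hf]

end intervalIntegral

theorem hasDerivAt_const_mul_log_sub_log_comp {φ : ℝ → ℝ} {d θ φ' : ℝ} (hθ : θ ≠ 0)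
    (hφθ : φ θ ≠ 0) (hφ : HasDerivAt φ φ' θ) :
    HasDerivAt (fun x => d * Real.log x - Real.log (φ x)) ((d - θ * φ' / φ θ) / θ) θ := by
  refine (((Real.hasDerivAt_log hθ).const_mul d).sub (hφ.log hφθ)).congr_deriv ?_
  field_simp

theorem integral_sub_logDeriv_div_eq {φ : ℝ → ℝ} {d t w : ℝ} (h0 : (0 : ℝ) ∉ uIcc t w)
    (hφ : ∀ θ ∈ uIcc t w, φ θ ≠ 0) (hC1 : ContDiffOn ℝ 1 φ (uIcc t w)) :
    ∫ θ in t..w, (d - θ * deriv φ θ / φ θ) / θ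
      = d * (Real.log w - Real.log t) - (Real.log (φ w) - Real.log (φ t)) := by
  have hne : ∀ θ ∈ uIcc t w, θ ≠ 0 := fun θ hθ h => h0 (h ▸ hθ)
  have hF : ContDiffOn ℝ 1 (fun x => d * Real.log x - Real.log (φ x)) (uIcc t w) :=
    (contDiffOn_const.mul (Real.contDiffOn_log.mono fun θ hθ => hne θ hθ)).sub (hC1.log hφ)
  rw [intervalIntegral.integral_eq_sub_of_contDiffOn_uIcc_of_eqOn_uIoo hF]
  · ring
  intro θ hθ
  have hθI : θ ∈ uIcc t w := uIoo_subset_uIcc_self hθ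
  have hφd : DifferentiableAt ℝ φ θ :=
    (hC1.contDiffAt (uIcc_mem_nhds_of_mem_uIoo hθ)).differentiableAt one_ne_zero
  exact (hasDerivAt_const_mul_log_sub_log_comp (hne θ hθI) (hφ θ hθI) hφd.hasDerivAt).deriv.symm

theorem stmt4_general (φ : ℝ → ℝ) (d : ℝ)
    (t w : ℝ) (htw : 0 < t / w) (hφtw : 0 < φ t / φ w)
    (hφ : ∀ θ ∈ Set.uIcc t w, φ θ ≠ 0)
    (hC1 : ContDiffOn ℝ 1 φ (Set.uIcc t w)) :
    φ t / φ w = (t / w) ^ d *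
      Real.exp (∫ θ in t..w, (d - θ * deriv φ θ / φ θ) / θ) := by
  have ht : t ≠ 0 := by rintro rfl; simp at htw
  have hw : w ≠ 0 := by rintro rfl; simp at htw
  rw [integral_sub_logDeriv_div_eq (zero_notMem_uIcc_of_div_pos htw) hφ hC1,
    Real.rpow_def_of_pos htw, ← Real.exp_add, Real.log_div ht hw]
  nth_rw 1 [← Real.exp_log hφtw]
  rw [Real.log_div (hφ t left_mem_uIcc) (hφ w right_mem_uIcc)]
  ring_nf

theorem stmt4 (φ : ℝ → ℝ) (d : ℝ)
    (hd : Filter.Tendsto (fun θ : ℝ => θ * deriv φ θ / φ θ) (𝓝[≠] (0 : ℝ)) (𝓝 d))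
    (t w : ℝ) (htw : 0 < t / w) (hφtw : 0 < φ t / φ w)
    (hφ : ∀ θ ∈ Set.uIcc t w, φ θ ≠ 0)
    (hC1 : ContDiffOn ℝ 1 φ (Set.uIcc t w)) :
    φ t / φ w = (t / w) ^ d *
      Real.exp (∫ θ in t..w, (d - θ * deriv φ θ / φ θ) / θ) :=
  stmt4_general φ d t w htw hφtw hφ hC1
end

section
/- Let F be non-zero with continuous partials on N_δ = {x ∈ ℝ^m : 0 < ‖x‖_∞ < δ}, and suppose F is a product F(x) = Π_{i=1}^m h_i(x_i) where each h_i : ℝ → (0,∞) is continuously differentiable on (−δ,δ)\{0} with lim_{t→0} t·h_i'(t)/h_i(t) = d_i. Then ID*_F := lim_{x→0, x∈N_δ, all x_i ≠ 0} xᵀ∇F(x)/F(x) exists and equals Σ_{i=1}^m d_i. -/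
/-! On a product the logarithmic derivative is additive: at a point with all coordinates nonzero,
`xᵀ∇F(x) / F(x) = ∑ i, x i * h i' (x i) / h i (x i)`, and the `i`-th term tends to `d i` because
`x i → 0` through nonzero values. -/

open Filter Topology

section ProductOfUnivariate

variable {ι : Type*} [Fintype ι] [DecidableEq ι] {h : ι → ℝ → ℝ} {x : ι → ℝ}

theorem hasFDerivAt_prod_apply (hh : ∀ i, DifferentiableAt ℝ (h i) (x i)) :
    HasFDerivAt (fun y : ι → ℝ => ∏ i, h i (y i))
      (∑ i, (∏ j ∈ Finset.univ.erase i, h j (x j)) •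
        deriv (h i) (x i) • ContinuousLinearMap.proj (R := ℝ) (φ := fun _ : ι => ℝ) i) x :=
  HasFDerivAt.finsetProd fun i _ =>
    (hh i).hasDerivAt.comp_hasFDerivAt x (hasFDerivAt_apply i x)

theorem fderiv_prod_apply_div_prod (hh : ∀ i, DifferentiableAt ℝ (h i) (x i))
    (hne : ∀ i, h i (x i) ≠ 0) (v : ι → ℝ) :
    fderiv ℝ (fun y : ι → ℝ => ∏ i, h i (y i)) x v / ∏ i, h i (x i) =
      ∑ i, v i * deriv (h i) (x i) / h i (x i) := by
  rw [(hasFDerivAt_prod_apply hh).fderiv]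
  simp only [FunLike.coe_sum, Finset.sum_apply, FunLike.coe_smul,
    Pi.smul_apply, ContinuousLinearMap.proj_apply, smul_eq_mul, Finset.sum_div]
  refine Finset.sum_congr rfl fun i _ => ?_
  have hrest : ∏ j ∈ Finset.univ.erase i, h j (x j) ≠ 0 :=
    Finset.prod_ne_zero_iff.mpr fun j _ => hne j
  rw [← Finset.prod_erase_mul _ _ (Finset.mem_univ i), div_eq_div_iff (mul_ne_zero hrest (hne i))
    (hne i)]
  ring

end ProductOfUnivariate

theorem tendsto_sum_apply_nhdsWithin_coord_ne_zero {ι : Type*} [Fintype ι] {g : ι → ℝ → ℝ}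
    {d : ι → ℝ} (hg : ∀ i, Tendsto (g i) (𝓝[≠] 0) (𝓝 (d i))) :
    Tendsto (fun x : ι → ℝ => ∑ i, g i (x i)) (𝓝[{x | ∀ i, x i ≠ 0}] 0) (𝓝 (∑ i, d i)) :=
  tendsto_finsetSum _ fun i _ => (hg i).comp <| tendsto_nhdsWithin_iff.mpr
    ⟨((continuous_apply i).tendsto 0).mono_left nhdsWithin_le_nhds,
      eventually_nhdsWithin_of_forall fun _ hx => hx i⟩

theorem mem_Ioo_of_norm_lt {ι : Type*} [Fintype ι] {x : ι → ℝ} {δ : ℝ} (hx : ‖x‖ < δ) (i : ι) :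
    x i ∈ Set.Ioo (-δ) δ :=
  abs_lt.mp ((norm_le_pi_norm x i).trans_lt hx)

theorem stmt17_general (m : ℕ) (δ : ℝ)
    (F : (Fin m → ℝ) → ℝ)
    (h : Fin m → ℝ → ℝ) (d : Fin m → ℝ)
    (hprod : ∀ x : Fin m → ℝ, F x = ∏ i, h i (x i))
    (hpos : ∀ i, ∀ t ∈ Set.Ioo (-δ) δ, t ≠ 0 → 0 < h i t)
    (hC1 : ∀ i, ∀ t ∈ Set.Ioo (-δ) δ, t ≠ 0 → ContDiffAt ℝ 1 (h i) t)
    (hd : ∀ i, Filter.Tendsto (fun t : ℝ => t * deriv (h i) t / h i t)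
      (𝓝[≠] (0 : ℝ)) (𝓝 (d i))) :
    Filter.Tendsto (fun x : Fin m → ℝ => fderiv ℝ F x x / F x)
      (𝓝[{x : Fin m → ℝ | 0 < ‖x‖ ∧ ‖x‖ < δ ∧ ∀ i, x i ≠ 0}] 0)
      (𝓝 (∑ i, d i)) := by
  obtain rfl : F = fun y => ∏ i, h i (y i) := funext hprod
  refine ((tendsto_sum_apply_nhdsWithin_coord_ne_zero hd).mono_left
    (nhdsWithin_mono _ fun x hx => hx.2.2)).congr' ?_
  filter_upwards [self_mem_nhdsWithin] with x hx
  obtain ⟨-, hxδ, hx0⟩ := hx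
  have hIoo := mem_Ioo_of_norm_lt hxδ
  exact (fderiv_prod_apply_div_prod
    (fun i => (hC1 i _ (hIoo i) (hx0 i)).differentiableAt one_ne_zero)
    (fun i => (hpos i _ (hIoo i) (hx0 i)).ne') x).symm

theorem stmt17 (m : ℕ) (hm : 0 < m) (δ : ℝ) (hδ : 0 < δ)
    (F : (Fin m → ℝ) → ℝ)
    (hF : ∀ x : Fin m → ℝ, 0 < ‖x‖ → ‖x‖ < δ → F x ≠ 0 ∧ ContDiffAt ℝ 1 F x)
    (h : Fin m → ℝ → ℝ) (d : Fin m → ℝ)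
    (hprod : ∀ x : Fin m → ℝ, F x = ∏ i, h i (x i))
    (hpos : ∀ i, ∀ t ∈ Set.Ioo (-δ) δ, t ≠ 0 → 0 < h i t)
    (hC1 : ∀ i, ∀ t ∈ Set.Ioo (-δ) δ, t ≠ 0 → ContDiffAt ℝ 1 (h i) t)
    (hd : ∀ i, Filter.Tendsto (fun t : ℝ => t * deriv (h i) t / h i t)
      (𝓝[≠] (0 : ℝ)) (𝓝 (d i))) :
    Filter.Tendsto (fun x : Fin m → ℝ => fderiv ℝ F x x / F x)
      (𝓝[{x : Fin m → ℝ | 0 < ‖x‖ ∧ ‖x‖ < δ ∧ ∀ i, x i ≠ 0}] 0)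
      (𝓝 (∑ i, d i)) :=
  stmt17_general m δ F h d hprod hpos hC1 hd
end
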